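/- Let H be an entropy, with maximal extension D̄_H and minimal extension D̲_H. Then: (i) for every n ∈ ℕ and p ∈ P(n): D̄_H(p‖u_n) = D̲_H(p‖u_n) = log n − H(p); (ii) if 𝔻 is any monotone divergence satisfying 𝔻(p‖u_n) = log n − H(p) for all n ∈ ℕ and all p ∈ P(n), then D̲_H(p‖q) ≤ 𝔻(p‖q) ≤ D̄_H(p‖q) for all n ∈ ℕ and p,q ∈ P(n). -/

import Mathlib

open scoped BigOperators ENNReal

/-- A probability vector: nonnegative entries summing to 1. -/
def IsProbVec {n : ℕ} (p : Fin n → ℝ) : Prop :=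
  (∀ i, 0 ≤ p i) ∧ ∑ i, p i = 1

/-- The uniform probability vector on `n` outcomes. -/
noncomputable def uniform (n : ℕ) : Fin n → ℝ := fun _ => (n : ℝ)⁻¹

/-- Kronecker (tensor) product of two vectors. -/
noncomputable def kron {n m : ℕ} (p : Fin n → ℝ) (q : Fin m → ℝ) : Fin (n * m) → ℝ :=
  fun i => p (finProdFinEquiv.symm i).1 * q (finProdFinEquiv.symm i).2

/-- Sum of the `k` largest entries (for vectors with nonnegative entries):
the supremum of sums over subsets of at most `k` indices. -/
noncomputable def maxPartialSum {n : ℕ} (p : Fin n → ℝ) (k : ℕ) : ℝ :=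
  sSup { x | ∃ s : Finset (Fin n), s.card ≤ k ∧ ∑ i ∈ s, p i = x }

/-- `p` majorises `q`: every partial sum of the `k` largest entries of `p`
dominates that of `q` (entries beyond a vector's length count as 0). -/
def Majorizes {n m : ℕ} (p : Fin n → ℝ) (q : Fin m → ℝ) : Prop :=
  ∀ k : ℕ, maxPartialSum q k ≤ maxPartialSum p k

/-- A channel: an `n × m` row-stochastic matrix. -/
def IsStochastic {n m : ℕ} (W : Matrix (Fin n) (Fin m) ℝ) : Prop :=
  (∀ i j, 0 ≤ W i j) ∧ ∀ i, ∑ j, W i j = 1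

/-- Relative majorisation of pairs: some channel maps `(p, q)` to `(p', q')`. -/
def RelMaj {n m : ℕ} (p q : Fin n → ℝ) (p' q' : Fin m → ℝ) : Prop :=
  ∃ W : Matrix (Fin n) (Fin m) ℝ, IsStochastic W ∧
    Matrix.vecMul p W = p' ∧ Matrix.vecMul q W = q'

/-- An entropy: a `[0,∞)`-valued function on probability vectors of all finite dimensions
that is monotone under mixing (majorisation), additive for Kronecker products,
and normalised so that `H(u₂) = log 2` (binary logarithm). -/
structure IsEntropy (H : (n : ℕ) → (Fin n → ℝ) → ℝ) : Prop where
  nonneg : ∀ {n : ℕ} (p : Fin n → ℝ), IsProbVec p → 0 ≤ H n p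
  mono : ∀ {n m : ℕ} (p : Fin n → ℝ) (p' : Fin m → ℝ),
    IsProbVec p → IsProbVec p' → Majorizes p p' → H n p ≤ H m p'
  additive : ∀ {n m : ℕ} (p : Fin n → ℝ) (q : Fin m → ℝ),
    IsProbVec p → IsProbVec q → H (n * m) (kron p q) = H n p + H m q
  normalized : H 2 (uniform 2) = Real.logb 2 2

/-- A monotone divergence: a `[0,∞]`-valued function on pairs of probability vectors of
equal finite dimension satisfying the data-processing inequality and `𝔻(1‖1) = 0`. -/
structure IsMonotoneDivergence (D : (n : ℕ) → (Fin n → ℝ) → (Fin n → ℝ) → ℝ≥0∞) : Prop where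
  dpi : ∀ {n m : ℕ} (p q : Fin n → ℝ) (p' q' : Fin m → ℝ),
    IsProbVec p → IsProbVec q → IsProbVec p' → IsProbVec q' →
    RelMaj p q p' q' → D m p' q' ≤ D n p q
  normalized : D 1 (fun _ => 1) (fun _ => 1) = 0

/-- A relative entropy: data-processing inequality, additivity for Kronecker products,
and the normalisation `𝔻(e₁‖u₂) = log 2` (binary logarithm). -/
structure IsRelativeEntropy (D : (n : ℕ) → (Fin n → ℝ) → (Fin n → ℝ) → ℝ≥0∞) : Prop where
  dpi : ∀ {n m : ℕ} (p q : Fin n → ℝ) (p' q' : Fin m → ℝ),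
    IsProbVec p → IsProbVec q → IsProbVec p' → IsProbVec q' →
    RelMaj p q p' q' → D m p' q' ≤ D n p q
  additive : ∀ {n m : ℕ} (p₁ q₁ : Fin n → ℝ) (p₂ q₂ : Fin m → ℝ),
    IsProbVec p₁ → IsProbVec q₁ → IsProbVec p₂ → IsProbVec q₂ →
    D (n * m) (kron p₁ p₂) (kron q₁ q₂) = D n p₁ q₁ + D m p₂ q₂
  normalized : D 2 ![1, 0] ![1/2, 1/2] = ENNReal.ofReal (Real.logb 2 2)

/-- The maximal extension of an entropy `H`:
`D̄_H(p‖q) := inf { log k − H(r) : k ∈ ℕ, r ∈ P(k), (r, u_k) ≽ (p, q) }`. -/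
noncomputable def DmaxExt (H : (n : ℕ) → (Fin n → ℝ) → ℝ) :
    (n : ℕ) → (Fin n → ℝ) → (Fin n → ℝ) → ℝ≥0∞ :=
  fun _ p q => ⨅ (k : ℕ) (r : Fin k → ℝ) (_ : IsProbVec r)
    (_ : RelMaj r (uniform k) p q), ENNReal.ofReal (Real.logb 2 k - H k r)

/-- The minimal extension of an entropy `H`:
`D̲_H(p‖q) := sup { log k − H(r) : k ∈ ℕ, r ∈ P(k), (p, q) ≽ (r, u_k) }`. -/
noncomputable def DminExt (H : (n : ℕ) → (Fin n → ℝ) → ℝ) :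
    (n : ℕ) → (Fin n → ℝ) → (Fin n → ℝ) → ℝ≥0∞ :=
  fun _ p q => ⨆ (k : ℕ) (r : Fin k → ℝ) (_ : IsProbVec r)
    (_ : RelMaj p q r (uniform k)), ENNReal.ofReal (Real.logb 2 k - H k r)

/-! If a channel `W` maps `(r, uₖ)` to `(p, uₙ)`, then `(a, b) ↦ (c, d)` with weight `W a c / k`
is a doubly stochastic channel mapping `r ⊗ uₙ` to `p ⊗ uₖ`, so `r ⊗ uₙ` majorises `p ⊗ uₖ`.
Additivity and monotonicity of `H` force `H(uₙ) = log n`, and then give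
`log n − H(p) ≤ log k − H(r)`. Hence the witness `r = p` is optimal in both extremal problems
defining the extensions at `(p‖uₙ)`. For a monotone divergence `𝔻` with `𝔻(r‖uₖ) = log k − H(r)`,
the data-processing inequality compares `𝔻(p‖q)` with every admissible witness `(r, uₖ)`. -/

open Finset

lemma bddAbove_partialSums {n : ℕ} {p : Fin n → ℝ} (hp : ∀ i, 0 ≤ p i) (k : ℕ) :
    BddAbove { x | ∃ s : Finset (Fin n), s.card ≤ k ∧ ∑ i ∈ s, p i = x } := by
  refine ⟨∑ i, p i, ?_⟩
  rintro x ⟨s, -, rfl⟩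
  exact sum_le_sum_of_subset_of_nonneg (subset_univ s) fun i _ _ => hp i

lemma sum_le_maxPartialSum {n : ℕ} {p : Fin n → ℝ} (hp : ∀ i, 0 ≤ p i) {k : ℕ}
    {s : Finset (Fin n)} (hs : s.card ≤ k) : ∑ i ∈ s, p i ≤ maxPartialSum p k :=
  le_csSup (bddAbove_partialSums hp k) ⟨s, hs, rfl⟩

lemma maxPartialSum_le {n : ℕ} {p : Fin n → ℝ} {k : ℕ} {c : ℝ}
    (h : ∀ s : Finset (Fin n), s.card ≤ k → ∑ i ∈ s, p i ≤ c) : maxPartialSum p k ≤ c :=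
  csSup_le ⟨0, ∅, by simp⟩ fun _ ⟨s, hs, hsum⟩ => hsum ▸ h s hs

/-- A `K`-subset with maximal sum cannot be improved by swapping one element. -/
lemma exists_card_eq_forall_le {ι : Type*} [Fintype ι] [DecidableEq ι] (x : ι → ℝ) {K : ℕ}
    (hK : K ≤ Fintype.card ι) :
    ∃ S : Finset ι, S.card = K ∧ ∀ i ∉ S, ∀ j ∈ S, x i ≤ x j := by
  obtain ⟨S₀, -, hS₀⟩ := exists_subset_card_eq (s := (univ : Finset ι)) (by simpa using hK)
  obtain ⟨S, hS, hmax⟩ := exists_max_image ((univ : Finset (Finset ι)).filter (·.card = K))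
    (fun s => ∑ i ∈ s, x i) ⟨S₀, by simp [hS₀]⟩
  have hcard : S.card = K := (mem_filter.1 hS).2
  refine ⟨S, hcard, fun i hi j hj => ?_⟩
  by_contra! hlt
  have hij : i ∉ S.erase j := fun h => hi (mem_of_mem_erase h)
  have hswap := hmax (insert i (S.erase j)) <| by
    simp only [mem_filter, mem_univ, true_and]
    rw [card_insert_of_notMem hij, card_erase_of_mem hj, hcard]
    have := card_pos.2 ⟨j, hj⟩
    omega
  rw [sum_insert hij, sum_erase_eq_sub hj] at hswap
  linarith

lemma sum_mul_le_sum_of_threshold {n : ℕ} {x t : Fin n → ℝ} {S : Finset (Fin n)} {θ : ℝ}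
    (hθ : 0 ≤ θ) (hout : ∀ i ∉ S, x i ≤ θ) (hin : ∀ i ∈ S, θ ≤ x i)
    (ht₀ : ∀ i, 0 ≤ t i) (ht₁ : ∀ i, t i ≤ 1) (hts : ∑ i, t i ≤ S.card) :
    ∑ i, x i * t i ≤ ∑ i ∈ S, x i :=
  calc ∑ i, x i * t i ≤ ∑ i, (θ * t i + if i ∈ S then x i - θ else 0) := by
        refine sum_le_sum fun i _ => ?_
        split_ifs with h
        · nlinarith [hin i h, ht₁ i]
        · nlinarith [hout i h, ht₀ i]
    _ = θ * ∑ i, t i + ∑ i ∈ S, (x i - θ) := by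
        rw [sum_add_distrib, mul_sum, sum_ite_mem, univ_inter]
    _ ≤ θ * S.card + ∑ i ∈ S, (x i - θ) := by gcongr
    _ = ∑ i ∈ S, x i := by rw [sum_sub_distrib, sum_const, nsmul_eq_mul]; ring

lemma sum_mul_le_maxPartialSum {n K : ℕ} {x t : Fin n → ℝ} (hx : ∀ i, 0 ≤ x i)
    (ht₀ : ∀ i, 0 ≤ t i) (ht₁ : ∀ i, t i ≤ 1) (hts : ∑ i, t i ≤ K) :
    ∑ i, x i * t i ≤ maxPartialSum x K := by
  rcases le_or_gt n K with hnK | hKn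
  · calc ∑ i, x i * t i ≤ ∑ i, x i := sum_le_sum fun i _ => by nlinarith [hx i, ht₀ i, ht₁ i]
      _ ≤ maxPartialSum x K := sum_le_maxPartialSum hx (by simpa using hnK)
  · obtain ⟨S, hcard, htop⟩ := exists_card_eq_forall_le x (K := K) (by simpa using hKn.le)
    have hne : Sᶜ.Nonempty := by
      rw [← card_pos, card_compl, Fintype.card_fin]
      omega
    obtain ⟨i₀, hi₀⟩ := hne
    refine (sum_mul_le_sum_of_threshold (θ := Sᶜ.sup' ⟨i₀, hi₀⟩ x) ?_ ?_ ?_ ht₀ ht₁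
      (hcard ▸ hts)).trans (sum_le_maxPartialSum hx hcard.le)
    · exact (hx i₀).trans (le_sup' x hi₀)
    · exact fun i hi => le_sup' x (mem_compl.2 hi)
    · exact fun j hj => sup'_le _ _ fun i hi => htop i (mem_compl.1 hi) j hj

lemma majorizes_vecMul {n m : ℕ} {x : Fin n → ℝ} (hx : ∀ i, 0 ≤ x i)
    {V : Matrix (Fin n) (Fin m) ℝ} (hV : ∀ i j, 0 ≤ V i j)
    (hrow : ∀ i, ∑ j, V i j ≤ 1) (hcol : ∀ j, ∑ i, V i j ≤ 1) :
    Majorizes x (Matrix.vecMul x V) := by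
  intro K
  refine maxPartialSum_le fun s hs => ?_
  have hrw : ∑ j ∈ s, Matrix.vecMul x V j = ∑ i, x i * ∑ j ∈ s, V i j := by
    simp only [Matrix.vecMul, dotProduct, mul_sum]
    exact sum_comm
  rw [hrw]
  refine sum_mul_le_maxPartialSum hx (fun i => sum_nonneg fun j _ => hV i j)
    (fun i => (sum_le_sum_of_subset_of_nonneg (subset_univ s) fun j _ _ => hV i j).trans
      (hrow i)) ?_
  calc ∑ i, ∑ j ∈ s, V i j = ∑ j ∈ s, ∑ i, V i j := sum_comm
    _ ≤ ∑ j ∈ s, (1 : ℝ) := sum_le_sum fun j _ => hcol j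
    _ ≤ K := by simpa using hs

lemma IsProbVec.pos {n : ℕ} {p : Fin n → ℝ} (hp : IsProbVec p) : 0 < n := by
  rcases Nat.eq_zero_or_pos n with rfl | hn
  · simpa using hp.2
  · exact hn

lemma isProbVec_uniform {n : ℕ} (hn : 0 < n) : IsProbVec (uniform n) :=
  ⟨fun _ => by unfold uniform; positivity, by simp [uniform, hn.ne']⟩

lemma sum_fin_mul {M : Type*} [AddCommMonoid M] {n m : ℕ} (F : Fin (n * m) → M) :
    ∑ i, F i = ∑ a : Fin n, ∑ b : Fin m, F (finProdFinEquiv (a, b)) := by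
  rw [← finProdFinEquiv.sum_comp, Fintype.sum_prod_type]

@[simp]
lemma kron_finProdFinEquiv {n m : ℕ} (p : Fin n → ℝ) (q : Fin m → ℝ) (a : Fin n) (b : Fin m) :
    kron p q (finProdFinEquiv (a, b)) = p a * q b := by
  simp [kron]

lemma IsProbVec.kron {n m : ℕ} {p : Fin n → ℝ} {q : Fin m → ℝ}
    (hp : IsProbVec p) (hq : IsProbVec q) : IsProbVec (kron p q) := by
  refine ⟨fun i => mul_nonneg (hp.1 _) (hq.1 _), ?_⟩
  simp only [sum_fin_mul, kron_finProdFinEquiv, ← sum_mul_sum, hp.2, hq.2, mul_one]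

lemma kron_uniform (n m : ℕ) : kron (uniform n) (uniform m) = uniform (n * m) := by
  funext i
  simp [kron, uniform, mul_comm]

/-- The channel spreading each input uniformly over all `b` outputs. -/
lemma majorizes_uniform {a b : ℕ} (ha : 0 < a) (hab : a ≤ b) :
    Majorizes (uniform a) (uniform b) := by
  have hb : (0 : ℝ) < b := by exact_mod_cast ha.trans_le hab
  have hV : Matrix.vecMul (uniform a) (Matrix.of fun (_ : Fin a) (_ : Fin b) => (b : ℝ)⁻¹)
      = uniform b := by
    funext j
    simp [Matrix.vecMul, dotProduct, uniform, ha.ne']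
  rw [← hV]
  refine majorizes_vecMul (isProbVec_uniform ha).1 (fun _ _ => inv_nonneg.2 hb.le)
    (fun _ => by simp [hb.ne']) (fun _ => ?_)
  simp only [Matrix.of_apply, sum_const, card_univ, Fintype.card_fin, nsmul_eq_mul]
  rw [← div_eq_mul_inv, div_le_one hb]
  exact_mod_cast hab

lemma majorizes_kron_uniform_of_relMaj {k n : ℕ} {r : Fin k → ℝ} {p : Fin n → ℝ}
    (hr : IsProbVec r) (hn : 0 < n) (hrel : RelMaj r (uniform k) p (uniform n)) :
    Majorizes (kron r (uniform n)) (kron p (uniform k)) := by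
  obtain ⟨W, ⟨hW₀, hW₁⟩, hrW, huW⟩ := hrel
  have hk : (k : ℝ) ≠ 0 := Nat.cast_ne_zero.2 hr.pos.ne'
  have hn' : (n : ℝ) ≠ 0 := Nat.cast_ne_zero.2 hn.ne'
  set V : Matrix (Fin (k * n)) (Fin (n * k)) ℝ :=
    Matrix.of fun i j => W (finProdFinEquiv.symm i).1 (finProdFinEquiv.symm j).1 / k
  have hVapply (a b c d) : V (finProdFinEquiv (a, b)) (finProdFinEquiv (c, d)) = W a c / k := by
    simp only [V, Matrix.of_apply, Equiv.symm_apply_apply]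
  have hvecMul (x : Fin k → ℝ) :
      Matrix.vecMul (kron x (uniform n)) V = kron (Matrix.vecMul x W) (uniform k) := by
    funext j
    obtain ⟨⟨c, d⟩, rfl⟩ := finProdFinEquiv.surjective j
    simp only [Matrix.vecMul, dotProduct, sum_fin_mul, kron_finProdFinEquiv, hVapply, uniform,
      sum_const, card_univ, Fintype.card_fin, nsmul_eq_mul, sum_mul]
    refine sum_congr rfl fun a _ => ?_
    field_simp
  have hcol (c : Fin n) : ∑ a, W a c / k = (n : ℝ)⁻¹ := by
    have := congrFun huW c
    simp only [Matrix.vecMul, dotProduct, uniform] at this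
    rw [← this]
    exact sum_congr rfl fun a _ => by field_simp
  rw [← hrW, ← hvecMul]
  refine majorizes_vecMul (hr.kron (isProbVec_uniform hn)).1 ?_ (fun i => le_of_eq ?_)
    (fun j => le_of_eq ?_)
  · intro i j
    exact div_nonneg (hW₀ _ _) (Nat.cast_nonneg k)
  · obtain ⟨⟨a, b⟩, rfl⟩ := finProdFinEquiv.surjective i
    simp only [sum_fin_mul, hVapply, sum_const, card_univ, Fintype.card_fin, nsmul_eq_mul,
      ← mul_sum, ← sum_div, hW₁ a]
    field_simp
  · obtain ⟨⟨c, d⟩, rfl⟩ := finProdFinEquiv.surjective j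
    simp only [sum_fin_mul, hVapply, sum_const, card_univ, Fintype.card_fin, nsmul_eq_mul,
      ← mul_sum, hcol]
    field_simp

lemma natLog_le_and_le_natLog_add_one {g : ℕ → ℝ}
    (hmono : ∀ a b : ℕ, 0 < a → a ≤ b → g a ≤ g b) (hpow : ∀ a : ℕ, g (2 ^ a) = a)
    {N : ℕ} (hN : 0 < N) : (Nat.log 2 N : ℝ) ≤ g N ∧ g N ≤ Nat.log 2 N + 1 := by
  constructor
  · rw [← hpow]
    exact hmono _ _ (by positivity) (Nat.pow_log_le_self 2 hN.ne')
  · exact_mod_cast (hmono _ _ hN (Nat.lt_pow_succ_log_self one_lt_two N).le).trans_eq (hpow _)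

/-- Comparing `n ^ m` with powers of two determines `g n` up to `1 / m`. -/
lemma eq_logb_of_monotone_of_pow {g : ℕ → ℝ}
    (hmono : ∀ a b : ℕ, 0 < a → a ≤ b → g a ≤ g b)
    (hpow : ∀ n : ℕ, 0 < n → ∀ m : ℕ, g (n ^ m) = m * g n) (htwo : g 2 = 1)
    {n : ℕ} (hn : 0 < n) : g n = Real.logb 2 n := by
  have hpow₂ (a : ℕ) : g (2 ^ a) = a := by rw [hpow 2 two_pos, htwo, mul_one]
  have hlogMono (a b : ℕ) (ha : 0 < a) (hab : a ≤ b) : Real.logb 2 a ≤ Real.logb 2 b :=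
    Real.logb_le_logb_of_le one_lt_two (by exact_mod_cast ha) (by exact_mod_cast hab)
  have hlogPow (a : ℕ) : Real.logb 2 ((2 ^ a : ℕ) : ℝ) = a := by
    rw [Nat.cast_pow, Nat.cast_ofNat, Real.logb_pow, Real.logb_self_eq_one one_lt_two, mul_one]
  have hclose (m : ℕ) : m * |g n - Real.logb 2 n| ≤ 1 := by
    have hg := natLog_le_and_le_natLog_add_one hmono hpow₂ (pow_pos hn m)
    have hl := natLog_le_and_le_natLog_add_one (g := fun N => Real.logb 2 N) hlogMono hlogPow
      (pow_pos hn m)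
    simp only [hpow n hn, Nat.cast_pow, Real.logb_pow] at hg hl
    rw [← abs_of_nonneg (Nat.cast_nonneg (α := ℝ) m), ← abs_mul, abs_le]
    constructor <;> linarith
  by_contra hne
  have hpos : 0 < |g n - Real.logb 2 n| := abs_pos.2 (sub_ne_zero.2 hne)
  obtain ⟨m, hm⟩ := exists_nat_gt (1 / |g n - Real.logb 2 n|)
  rw [div_lt_iff₀ hpos] at hm
  linarith [hclose m]

namespace IsEntropy

variable {H : (n : ℕ) → (Fin n → ℝ) → ℝ}

lemma uniform_mul (hH : IsEntropy H) {n m : ℕ} (hn : 0 < n) (hm : 0 < m) :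
    H (n * m) (uniform (n * m)) = H n (uniform n) + H m (uniform m) := by
  rw [← kron_uniform]
  exact hH.additive _ _ (isProbVec_uniform hn) (isProbVec_uniform hm)

lemma uniform_pow (hH : IsEntropy H) {n : ℕ} (hn : 0 < n) (m : ℕ) :
    H (n ^ m) (uniform (n ^ m)) = m * H n (uniform n) := by
  induction m with
  | zero =>
    have h : H 1 (uniform 1) = H 1 (uniform 1) + H 1 (uniform 1) :=
      hH.uniform_mul one_pos one_pos
    rw [Nat.cast_zero, zero_mul]
    change H 1 (uniform 1) = 0
    linarith
  | succ m ih =>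
    rw [pow_succ, hH.uniform_mul (pow_pos hn m) hn, ih]
    push_cast
    ring

lemma uniform_eq_logb (hH : IsEntropy H) {n : ℕ} (hn : 0 < n) :
    H n (uniform n) = Real.logb 2 n :=
  eq_logb_of_monotone_of_pow (g := fun n => H n (uniform n))
    (fun _ _ ha hab => hH.mono _ _ (isProbVec_uniform ha)
      (isProbVec_uniform (ha.trans_le hab)) (majorizes_uniform ha hab))
    (fun _ hn m => hH.uniform_pow hn m)
    (by rw [hH.normalized, Real.logb_self_eq_one one_lt_two]) hn

lemma logb_sub_le_of_relMaj (hH : IsEntropy H) {k n : ℕ} {r : Fin k → ℝ} {p : Fin n → ℝ}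
    (hr : IsProbVec r) (hp : IsProbVec p) (hrel : RelMaj r (uniform k) p (uniform n)) :
    Real.logb 2 n - H n p ≤ Real.logb 2 k - H k r := by
  have hun := isProbVec_uniform hp.pos
  have huk := isProbVec_uniform hr.pos
  have hmono := hH.mono _ _ (hr.kron hun) (hp.kron huk)
    (majorizes_kron_uniform_of_relMaj hr hp.pos hrel)
  rw [hH.additive r _ hr hun, hH.additive p _ hp huk, hH.uniform_eq_logb hp.pos,
    hH.uniform_eq_logb hr.pos] at hmono
  linarith

end IsEntropy

lemma relMaj_refl {n : ℕ} (p q : Fin n → ℝ) : RelMaj p q p q :=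
  ⟨1, ⟨fun i j => by by_cases h : i = j <;> simp [Matrix.one_apply, h],
    fun i => by simp [Matrix.one_apply]⟩, Matrix.vecMul_one p, Matrix.vecMul_one q⟩

section Extensions

variable {H : (n : ℕ) → (Fin n → ℝ) → ℝ} {n k : ℕ} {p q : Fin n → ℝ} {r : Fin k → ℝ}

lemma DmaxExt_le (hr : IsProbVec r) (hrel : RelMaj r (uniform k) p q) :
    DmaxExt H n p q ≤ ENNReal.ofReal (Real.logb 2 k - H k r) :=
  iInf_le_of_le k <| iInf_le_of_le r <| iInf_le_of_le hr <| iInf_le_of_le hrel le_rfl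

lemma le_DmaxExt {x : ℝ≥0∞} (h : ∀ (k : ℕ) (r : Fin k → ℝ), IsProbVec r →
      RelMaj r (uniform k) p q → x ≤ ENNReal.ofReal (Real.logb 2 k - H k r)) :
    x ≤ DmaxExt H n p q := by
  simp only [DmaxExt, le_iInf_iff]
  exact h

lemma le_DminExt (hr : IsProbVec r) (hrel : RelMaj p q r (uniform k)) :
    ENNReal.ofReal (Real.logb 2 k - H k r) ≤ DminExt H n p q :=
  le_iSup_of_le k <| le_iSup_of_le r <| le_iSup_of_le hr <| le_iSup_of_le hrel le_rfl

lemma DminExt_le {x : ℝ≥0∞} (h : ∀ (k : ℕ) (r : Fin k → ℝ), IsProbVec r →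
      RelMaj p q r (uniform k) → ENNReal.ofReal (Real.logb 2 k - H k r) ≤ x) :
    DminExt H n p q ≤ x := by
  simp only [DminExt, iSup_le_iff]
  exact h

end Extensions

/-- both extensions of an entropy `H` agree with `log n − H(p)` on
`(p ‖ uₙ)`, and any monotone divergence with this property is sandwiched between
`D̲_H` and `D̄_H`. -/
theorem stmt10 (H : (n : ℕ) → (Fin n → ℝ) → ℝ) (hH : IsEntropy H) :
    (∀ (n : ℕ) (p : Fin n → ℝ), IsProbVec p →
      DmaxExt H n p (uniform n) = ENNReal.ofReal (Real.logb 2 n - H n p) ∧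
      DminExt H n p (uniform n) = ENNReal.ofReal (Real.logb 2 n - H n p)) ∧
    ∀ D : (n : ℕ) → (Fin n → ℝ) → (Fin n → ℝ) → ℝ≥0∞, IsMonotoneDivergence D →
      (∀ (n : ℕ) (p : Fin n → ℝ), IsProbVec p →
        D n p (uniform n) = ENNReal.ofReal (Real.logb 2 n - H n p)) →
      ∀ (n : ℕ) (p q : Fin n → ℝ), IsProbVec p → IsProbVec q →
        DminExt H n p q ≤ D n p q ∧ D n p q ≤ DmaxExt H n p q := by
  refine ⟨fun n p hp => ⟨?_, ?_⟩, fun D hD hDu n p q hp hq => ⟨?_, ?_⟩⟩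
  · refine le_antisymm (DmaxExt_le hp (relMaj_refl _ _)) (le_DmaxExt fun k r hr hrel => ?_)
    exact ENNReal.ofReal_le_ofReal (hH.logb_sub_le_of_relMaj hr hp hrel)
  · refine le_antisymm (DminExt_le fun k r hr hrel => ?_) (le_DminExt hp (relMaj_refl _ _))
    exact ENNReal.ofReal_le_ofReal (hH.logb_sub_le_of_relMaj hp hr hrel)
  · refine DminExt_le fun k r hr hrel => ?_
    rw [← hDu k r hr]
    exact hD.dpi _ _ _ _ hp hq hr (isProbVec_uniform hr.pos) hrel
  · refine le_DmaxExt fun k r hr hrel => ?_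
    rw [← hDu k r hr]
    exact hD.dpi _ _ _ _ hr (isProbVec_uniform hr.pos) hp hq hrel
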